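/- arXiv:2605.15493 — 6 statements merged into one kernel-verified Lean document; each statement's English description precedes it below -/
import Mathlib

section
/- For every integer n ≥ 1 and all elements a_1, ..., a_{2n+1}, b_1, b_2 of S_{(4,124)}, if U = a_1a_2 + a_2a_3 + ... + a_{2n}a_{2n+1} + a_{2n+1}a_1 + b_1b_2 + b_2b_1 + b_1, then b_2 + U = U (i.e., S_{(4,124)} satisfies the inequality q^(n) ≼ u^(n) for every n ≥ 1). -/
/-- The four-element ai-semiring `S_{(4,124)}`; `e1, e2, e3, e4` stand for `1, 2, 3, 4`. -/
inductive S124 : Type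
  | e1 | e2 | e3 | e4
  deriving DecidableEq

open S124

/-- Addition of `S_{(4,124)}`. -/
def S124.add : S124 → S124 → S124
  | e1, _ => e1
  | _, e1 => e1
  | e2, e2 => e2
  | e2, e3 => e2
  | e3, e2 => e2
  | e2, e4 => e1
  | e4, e2 => e1
  | e3, e3 => e3
  | e3, e4 => e1
  | e4, e3 => e1
  | e4, e4 => e4

/-- Multiplication of `S_{(4,124)}`. -/
def S124.mul : S124 → S124 → S124
  | e1, _ => e1
  | _, e1 => e1
  | e2, e2 => e1
  | e2, e3 => e2
  | e3, e2 => e2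
  | e2, e4 => e1
  | e4, e2 => e1
  | e3, e3 => e3
  | e3, e4 => e4
  | e4, e3 => e4
  | e4, e4 => e2

instance : Add S124 := ⟨S124.add⟩
instance : Mul S124 := ⟨S124.mul⟩

/-!
In `S_{(4,124)}` a sum equals `4` only if every summand does, and `xy = 4` only for
`{x, y} = {3, 4}`. Around the odd cycle `a₁a₂, …, a_{2n}a_{2n+1}, a_{2n+1}a₁` the factors `3` and `4`
cannot alternate, so the cycle part `X` of `U` is not `4`; and a finite check shows
`b₂ + (X + B) = X + B` for `B = b₁b₂ + b₂b₁ + b₁` and every `X ≠ 4`.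
-/

instance : Fintype S124 :=
  ⟨{e1, e2, e3, e4}, by intro x; cases x <;> simp⟩

instance : AddSemigroup S124 where
  add_assoc := by decide

theorem List.foldr_add_add {α β : Type*} [AddSemigroup α] (g : β → α) (l : List β) (z t : α) :
    l.foldr (fun i acc => g i + acc) (z + t) = l.foldr (fun i acc => g i + acc) z + t := by
  induction l with
  | nil => rfl
  | cons x xs ih => simp only [List.foldr, ih, add_assoc]

theorem List.forall_eq_of_foldr_add_eq {α β : Type*} [Add α] {c : α}
    (hc : ∀ x y : α, x + y = c → x = c ∧ y = c) (g : β → α) (l : List β) (z : α)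
    (h : l.foldr (fun i acc => g i + acc) z = c) : z = c ∧ ∀ i ∈ l, g i = c := by
  induction l with
  | nil => exact ⟨h, by simp⟩
  | cons x xs ih =>
    obtain ⟨hx, hxs⟩ := hc _ _ h
    obtain ⟨hz, hall⟩ := ih hxs
    exact ⟨hz, List.forall_mem_cons.mpr ⟨hx, hall⟩⟩

theorem eq_iterate_of_forall_lt_succ_eq {α : Type*} (f : α → α) (a : ℕ → α) (m : ℕ)
    (h : ∀ i < m, a (i + 1) = f (a i)) : a m = f^[m] (a 0) := by
  induction m with
  | zero => rfl
  | succ k ih =>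
    rw [h k k.lt_succ_self, ih fun i hi => h i (by omega), Function.iterate_succ_apply']

namespace S124

def swap34 : S124 → S124
  | e3 => e4
  | e4 => e3
  | x => x

theorem swap34_involutive : Function.Involutive swap34 := by
  intro x; cases x <;> rfl

theorem eq_e4_of_add_eq_e4 : ∀ x y : S124, x + y = e4 → x = e4 ∧ y = e4 := by decide

theorem eq_swap34_of_mul_eq_e4 : ∀ x y : S124, x * y = e4 → y = swap34 x := by decide

theorem mul_self_ne_e4 : ∀ x : S124, x * x ≠ e4 := by decide

theorem odd_cycle_mul_ne_e4 (n : ℕ) (a : ℕ → S124)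
    (h : ∀ i < 2 * n, a (i + 1) * a (i + 2) = e4) : a (2 * n + 1) * a 1 ≠ e4 := by
  have hpath : a (2 * n + 1) = swap34^[2 * n] (a 1) :=
    eq_iterate_of_forall_lt_succ_eq swap34 (fun i => a (i + 1)) (2 * n)
      fun i hi => eq_swap34_of_mul_eq_e4 _ _ (h i hi)
  rw [hpath, swap34_involutive.iterate_two_mul, id]
  exact mul_self_ne_e4 _

theorem add_eq_self_of_ne_e4 : ∀ b₁ b₂ x : S124, x ≠ e4 →
    b₂ + (x + (b₁ * b₂ + (b₂ * b₁ + b₁))) = x + (b₁ * b₂ + (b₂ * b₁ + b₁)) := by decide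

end S124

theorem S124_satisfies_qn_le_un_general (n : ℕ) (a b : ℕ → S124)
    (U : S124)
    (hU : U = (List.range (2 * n)).foldr (fun i acc => a (i + 1) * a (i + 2) + acc)
      (a (2 * n + 1) * a 1 + (b 1 * b 2 + (b 2 * b 1 + b 1)))) :
    b 2 + U = U := by
  set X := (List.range (2 * n)).foldr (fun i acc => a (i + 1) * a (i + 2) + acc)
    (a (2 * n + 1) * a 1) with hX
  have hUX : U = X + (b 1 * b 2 + (b 2 * b 1 + b 1)) := by rw [hU, hX, List.foldr_add_add]
  have hX_ne : X ≠ e4 := by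
    intro hX_eq
    obtain ⟨hlast, hpath⟩ :=
      List.forall_eq_of_foldr_add_eq eq_e4_of_add_eq_e4 _ _ _ (hX ▸ hX_eq)
    exact odd_cycle_mul_ne_e4 n a (fun i hi => hpath i (List.mem_range.mpr hi)) hlast
  rw [hUX]
  exact add_eq_self_of_ne_e4 _ _ _ hX_ne

/-- For every `n ≥ 1` and all `a₁, …, a_{2n+1}, b₁, b₂` in `S_{(4,124)}`,
with `U = a₁a₂ + a₂a₃ + ⋯ + a_{2n}a_{2n+1} + a_{2n+1}a₁ + b₁b₂ + b₂b₁ + b₁`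
we have `b₂ + U = U`, i.e. `S_{(4,124)}` satisfies `q⁽ⁿ⁾ ≼ u⁽ⁿ⁾` for every `n ≥ 1`. -/
theorem S124_satisfies_qn_le_un (n : ℕ) (hn : 1 ≤ n) (a b : ℕ → S124)
    (U : S124)
    (hU : U = (List.range (2 * n)).foldr (fun i acc => a (i + 1) * a (i + 2) + acc)
      (a (2 * n + 1) * a 1 + (b 1 * b 2 + (b 2 * b 1 + b 1)))) :
    b 2 + U = U :=
  S124_satisfies_qn_le_un_general n a b U hU
end

section
/- For every integer n ≥ 1 and all elements a_1, ..., a_{2n+1}, b_1, b_2 of S_2, if U = a_1a_2 + a_2a_3 + ... + a_{2n}a_{2n+1} + a_{2n+1}a_1 + b_1b_2 + b_2b_1 + b_1, then b_2 + U = U (i.e., S_2 satisfies the inequality q^(n) ≼ u^(n) for every n ≥ 1). -/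
/-!
In `S₂` the element `1` absorbs addition, and `b₁b₂ + b₂b₁ + b₁ = 1` identically: a product is
`1` unless both factors are `3`, and when `b₁ = b₂ = 3` the sum is `2 + 2 + 3 = 1`. Hence
`U = 1` is the top element and `b₂ ≤ U` for every `b₂`.
-/

/-- The three-element ai-semiring `S₂`; `e1, e2, e3` stand for `1, 2, 3`. -/
inductive S2T : Type
  | e1 | e2 | e3
  deriving DecidableEq

open S2T

def S2T.add : S2T → S2T → S2T
  | e1, _ => e1
  | _, e1 => e1
  | e2, e2 => e2
  | e2, e3 => e1
  | e3, e2 => e1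
  | e3, e3 => e3

def S2T.mul : S2T → S2T → S2T
  | e3, e3 => e2
  | _, _ => e1

instance : Add S2T := ⟨S2T.add⟩
instance : Mul S2T := ⟨S2T.mul⟩

namespace S2T

theorem add_e1 (x : S2T) : x + e1 = e1 := by
  cases x <;> rfl

theorem mul_add_mul_add_self (x y : S2T) : x * y + (y * x + x) = e1 := by
  cases x <;> cases y <;> rfl

end S2T

theorem S2_satisfies_qn_le_un_general (n : ℕ) (a b : ℕ → S2T)
    (U : S2T)
    (hU : U = (List.range (2 * n)).foldr (fun i acc => a (i + 1) * a (i + 2) + acc)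
      (a (2 * n + 1) * a 1 + (b 1 * b 2 + (b 2 * b 1 + b 1)))) :
    b 2 + U = U := by
  have hU_eq_e1 : U = e1 := by
    rw [hU, S2T.mul_add_mul_add_self, S2T.add_e1]
    exact List.foldr_fixed' (fun _ => S2T.add_e1 _) _
  rw [hU_eq_e1, S2T.add_e1]

/-- For every `n ≥ 1` and all `a₁, …, a_{2n+1}, b₁, b₂` in `S₂`,
with `U = a₁a₂ + a₂a₃ + ⋯ + a_{2n}a_{2n+1} + a_{2n+1}a₁ + b₁b₂ + b₂b₁ + b₁`
we have `b₂ + U = U`, i.e. `S₂` satisfies `q⁽ⁿ⁾ ≼ u⁽ⁿ⁾` for every `n ≥ 1`. -/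
theorem S2_satisfies_qn_le_un (n : ℕ) (hn : 1 ≤ n) (a b : ℕ → S2T)
    (U : S2T)
    (hU : U = (List.range (2 * n)).foldr (fun i acc => a (i + 1) * a (i + 2) + acc)
      (a (2 * n + 1) * a 1 + (b 1 * b 2 + (b 2 * b 1 + b 1)))) :
    b 2 + U = U :=
  S2_satisfies_qn_le_un_general n a b U hU
end

section
/- For every integer n ≥ 1 and all elements a_1, ..., a_{2n+1}, b_1, b_2 of S_7, if U = a_1a_2 + a_2a_3 + ... + a_{2n}a_{2n+1} + a_{2n+1}a_1 + b_1b_2 + b_2b_1 + b_1, then b_2 + U = U (i.e., S_7 satisfies the inequality q^(n) ≼ u^(n) for every n ≥ 1). -/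
/-!
In `S₇` a sum equals `a` (resp. `1`) exactly when every summand does, while `0` absorbs
everything. So if `U = 0` there is nothing to prove, and if `U = 1` then `b₁ = 1` and
`b₁b₂ = 1`, forcing `b₂ = 1`. The case `U = a` is impossible: `xy = a` forces `{x, y} = {a, 1}`,
so the values along the odd cycle `a₁, …, a_{2n+1}, a₁` would have to alternate.
-/

/-- The three-element ai-semiring `S₇`; `z, a, o` stand for `0, a, 1`. -/
inductive S7T : Type
  | z | a | o
  deriving DecidableEq

open S7T

/-- Addition of `S₇`. -/
def S7T.add : S7T → S7T → S7T
  | z, _ => z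
  | _, z => z
  | a, a => a
  | a, o => z
  | o, a => z
  | o, o => o

/-- Multiplication of `S₇`. -/
def S7T.mul : S7T → S7T → S7T
  | z, _ => z
  | _, z => z
  | a, a => z
  | a, o => a
  | o, a => a
  | o, o => o

instance : Add S7T := ⟨S7T.add⟩
instance : Mul S7T := ⟨S7T.mul⟩

theorem foldr_add_eq_iff {α β : Type*} [Add β] {c : β}
    (hc : ∀ x y : β, x + y = c ↔ x = c ∧ y = c) (f : α → β) (l : List α) (s : β) :
    l.foldr (fun i t => f i + t) s = c ↔ (∀ i ∈ l, f i = c) ∧ s = c := by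
  induction l with
  | nil => simp
  | cons j l ih => simp [hc, ih, and_assoc]

namespace S7T

instance : Fintype S7T :=
  ⟨{z, a, o}, by intro x; cases x <;> simp⟩

theorem add_z (x : S7T) : x + z = z := by
  revert x; decide

theorem add_eq_a_iff : ∀ x y : S7T, x + y = a ↔ x = a ∧ y = a := by
  decide

theorem add_eq_o_iff : ∀ x y : S7T, x + y = o ↔ x = o ∧ y = o := by
  decide

theorem mul_eq_o_iff {x y : S7T} : x * y = o ↔ x = o ∧ y = o := by
  revert x y; decide

theorem mul_self_ne_a (x : S7T) : x * x ≠ a := by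
  revert x; decide

theorem eq_of_mul_eq_a_of_mul_eq_a {x y w : S7T} : x * y = a → y * w = a → w = x := by
  revert x y w; decide

theorem odd_index_eq_of_mul_succ_eq_a {x : ℕ → S7T} {n : ℕ}
    (h : ∀ i < 2 * n, x (i + 1) * x (i + 2) = a) : ∀ k ≤ n, x (2 * k + 1) = x 1
  | 0, _ => rfl
  | k + 1, hk => by
    have hstep : x (2 * k + 3) = x (2 * k + 1) :=
      eq_of_mul_eq_a_of_mul_eq_a (h (2 * k) (by omega)) (h (2 * k + 1) (by omega))
    rw [show 2 * (k + 1) + 1 = 2 * k + 3 by ring, hstep]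
    exact odd_index_eq_of_mul_succ_eq_a h k (by omega)

theorem odd_cycle_mul_ne_a {x : ℕ → S7T} {n : ℕ}
    (h : ∀ i < 2 * n, x (i + 1) * x (i + 2) = a) : x (2 * n + 1) * x 1 ≠ a := by
  rw [odd_index_eq_of_mul_succ_eq_a h n le_rfl]
  exact mul_self_ne_a _

end S7T

theorem S7_satisfies_qn_le_un_general (n : ℕ) (a b : ℕ → S7T)
    (U : S7T)
    (hU : U = (List.range (2 * n)).foldr (fun i acc => a (i + 1) * a (i + 2) + acc)
      (a (2 * n + 1) * a 1 + (b 1 * b 2 + (b 2 * b 1 + b 1)))) :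
    b 2 + U = U := by
  cases hUv : U with
  | z => exact add_z _
  | a =>
    rw [hUv, eq_comm, foldr_add_eq_iff add_eq_a_iff, add_eq_a_iff] at hU
    obtain ⟨hcycle, hlast, -⟩ := hU
    exact absurd hlast (odd_cycle_mul_ne_a fun i hi => hcycle i (List.mem_range.2 hi))
  | o =>
    rw [hUv, eq_comm, foldr_add_eq_iff add_eq_o_iff, add_eq_o_iff, add_eq_o_iff] at hU
    obtain ⟨-, -, hb12, -⟩ := hU
    rw [(mul_eq_o_iff.1 hb12).2]
    rfl

/-- For every `n ≥ 1` and all `a₁, …, a_{2n+1}, b₁, b₂` in `S₇`,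
with `U = a₁a₂ + a₂a₃ + ⋯ + a_{2n}a_{2n+1} + a_{2n+1}a₁ + b₁b₂ + b₂b₁ + b₁`
we have `b₂ + U = U`, i.e. `S₇` satisfies `q⁽ⁿ⁾ ≼ u⁽ⁿ⁾` for every `n ≥ 1`. -/
theorem S7_satisfies_qn_le_un (n : ℕ) (hn : 1 ≤ n) (a b : ℕ → S7T)
    (U : S7T)
    (hU : U = (List.range (2 * n)).foldr (fun i acc => a (i + 1) * a (i + 2) + acc)
      (a (2 * n + 1) * a 1 + (b 1 * b 2 + (b 2 * b 1 + b 1)))) :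
    b 2 + U = U :=
  S7_satisfies_qn_le_un_general n a b U hU
end

section
/- For every integer n ≥ 1 and all elements a_1, ..., a_{2n+1}, b_1, b_2 of S_53, if U = a_1a_2 + a_2a_3 + ... + a_{2n}a_{2n+1} + a_{2n+1}a_1 + b_1b_2 + b_2b_1 + b_1, then b_2 + U = U (i.e., S_53 satisfies the inequality q^(n) ≼ u^(n) for every n ≥ 1). -/
/-! In an additively commutative semigroup, `c + x = x` survives adding further summands to `x`.
So the cycle terms `aᵢaᵢ₊₁` play no role, and everything reduces to `b₂ ≤ b₁b₂ + b₂b₁ + b₁`,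
which holds in `S₅₃` by checking the nine cases. -/

/-- The three-element ai-semiring `S₅₃`; `e1, e2, e3` stand for `1, 2, 3`. -/
inductive S53T : Type
  | e1 | e2 | e3
  deriving DecidableEq

open S53T

/-- Addition of `S₅₃`. -/
def S53T.add : S53T → S53T → S53T
  | e3, _ => e3
  | _, e3 => e3
  | e1, _ => e1
  | _, e1 => e1
  | e2, e2 => e2

/-- Multiplication of `S₅₃`. -/
def S53T.mul : S53T → S53T → S53T
  | e3, _ => e3
  | _, e3 => e3
  | e1, e1 => e3
  | e1, e2 => e1
  | e2, e1 => e1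
  | e2, e2 => e2

instance : Add S53T := ⟨S53T.add⟩
instance : Mul S53T := ⟨S53T.mul⟩

instance : AddCommSemigroup S53T where
  add_assoc a b c := by cases a <;> cases b <;> cases c <;> rfl
  add_comm a b := by cases a <;> cases b <;> rfl

theorem add_add_eq_of_add_eq {α : Type*} [AddCommSemigroup α] {c x : α} (t : α)
    (h : c + x = x) : c + (t + x) = t + x := by
  rw [add_left_comm, h]

theorem add_foldr_add_eq_of_add_eq {α β : Type*} [AddCommSemigroup α] (f : β → α) {c x : α}
    (h : c + x = x) (l : List β) :
    c + l.foldr (fun i acc => f i + acc) x = l.foldr (fun i acc => f i + acc) x := by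
  induction l with
  | nil => exact h
  | cons i l ih => exact add_add_eq_of_add_eq _ ih

theorem S53T.add_mul_add_mul_add_self (u v : S53T) :
    v + (u * v + (v * u + u)) = u * v + (v * u + u) := by
  cases u <;> cases v <;> rfl

theorem S53_satisfies_qn_le_un_general (n : ℕ) (a b : ℕ → S53T)
    (U : S53T)
    (hU : U = (List.range (2 * n)).foldr (fun i acc => a (i + 1) * a (i + 2) + acc)
      (a (2 * n + 1) * a 1 + (b 1 * b 2 + (b 2 * b 1 + b 1)))) :
    b 2 + U = U := by
  subst hU
  exact add_foldr_add_eq_of_add_eq _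
    (add_add_eq_of_add_eq _ (S53T.add_mul_add_mul_add_self (b 1) (b 2))) _

/-- For every `n ≥ 1` and all `a₁, …, a_{2n+1}, b₁, b₂` in `S₅₃`,
with `U = a₁a₂ + a₂a₃ + ⋯ + a_{2n}a_{2n+1} + a_{2n+1}a₁ + b₁b₂ + b₂b₁ + b₁`
we have `b₂ + U = U`, i.e. `S₅₃` satisfies `q⁽ⁿ⁾ ≼ u⁽ⁿ⁾` for every `n ≥ 1`. -/
theorem S53_satisfies_qn_le_un (n : ℕ) (hn : 1 ≤ n) (a b : ℕ → S53T)
    (U : S53T)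
    (hU : U = (List.range (2 * n)).foldr (fun i acc => a (i + 1) * a (i + 2) + acc)
      (a (2 * n + 1) * a 1 + (b 1 * b 2 + (b 2 * b 1 + b 1)))) :
    b 2 + U = U :=
  S53_satisfies_qn_le_un_general n a b U hU
end

section
/- The map f from S_{(4,124)} to S_7 defined by f(1) = f(2) = 0, f(3) = 1, f(4) = a is a surjective map preserving addition and multiplication (f(x+y) = f(x)+f(y) and f(x·y) = f(x)·f(y) for all x, y), and f(x) = f(y) holds exactly when x = y or {x,y} = {1,2}; hence S_7 is isomorphic to the quotient of S_{(4,124)} by the congruence whose unique nontrivial class is {1,2}. -/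
open S124

open S7T

/-! The class `{1, 2}` is absorbing for both operations of `S_{(4,124)}` (a bi-ideal),
and on the remaining elements `3, 4` the tables of `S_{(4,124)}` read modulo that class are
those of `1, a` in `S₇`.  So `f` is the Rees quotient map collapsing `{1, 2}` to the zero `0`
of `S₇`, and each claim is a check of the finite tables. -/

def S124.toS7 : S124 → S7T
  | e1 => z
  | e2 => z
  | e3 => o
  | e4 => a

namespace S124

theorem toS7_surjective : Function.Surjective toS7
  | z => ⟨e1, rfl⟩
  | a => ⟨e4, rfl⟩
  | o => ⟨e3, rfl⟩

theorem toS7_add (x y : S124) : toS7 (x + y) = toS7 x + toS7 y := by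
  cases x <;> cases y <;> rfl

theorem toS7_mul (x y : S124) : toS7 (x * y) = toS7 x * toS7 y := by
  cases x <;> cases y <;> rfl

theorem toS7_eq_toS7_iff (x y : S124) :
    toS7 x = toS7 y ↔ x = y ∨ (x = e1 ∧ y = e2) ∨ (x = e2 ∧ y = e1) := by
  cases x <;> cases y <;> decide

theorem eq_toS7 {f : S124 → S7T} (h1 : f e1 = z) (h2 : f e2 = z) (h3 : f e3 = o)
    (h4 : f e4 = a) : f = toS7 := by
  funext x
  cases x <;> assumption

end S124

/-- The map `f : S_{(4,124)} → S₇` with `f(1) = f(2) = 0`, `f(3) = 1`,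
`f(4) = a` is surjective, preserves addition and multiplication, and identifies exactly
the elements `1` and `2`; hence `S₇` is isomorphic to the quotient of `S_{(4,124)}` by the
congruence whose unique nontrivial class is `{1, 2}`. -/
theorem S7_is_quotient_of_S124 (f : S124 → S7T)
    (hf1 : f S124.e1 = S7T.z) (hf2 : f S124.e2 = S7T.z)
    (hf3 : f S124.e3 = S7T.o) (hf4 : f S124.e4 = S7T.a) :
    Function.Surjective f ∧
    (∀ x y : S124, f (x + y) = f x + f y) ∧
    (∀ x y : S124, f (x * y) = f x * f y) ∧
    (∀ x y : S124, f x = f y ↔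
      (x = y ∨ (x = S124.e1 ∧ y = S124.e2) ∨ (x = S124.e2 ∧ y = S124.e1))) := by
  obtain rfl := S124.eq_toS7 hf1 hf2 hf3 hf4
  exact ⟨S124.toS7_surjective, S124.toS7_add, S124.toS7_mul, S124.toS7_eq_toS7_iff⟩
end

section
/- For every integer n ≥ 1, the term u^(n) = x_1x_2 + x_2x_3 + ... + x_{2n}x_{2n+1} + x_{2n+1}x_1 + y_1y_2 + y_2y_1 + y_1 (over the 2n+3 distinct variables x_1, ..., x_{2n+1}, y_1, y_2) satisfies δ(u^(n)) = ∅; that is, there is no subset Z of the variables of u^(n) such that every summand of u^(n) contains exactly one variable from Z, occurring exactly once in that summand. -/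
/-! The words `x₁x₂, …, x_{2n}x_{2n+1}, x_{2n+1}x₁` form a cycle of odd length `2n + 1` on
distinct variables. A set `Z ∈ δ(u⁽ⁿ⁾)` meets each of these two-letter words in exactly one
letter, so membership in `Z` alternates along the cycle; going once around an odd cycle then
forces `x₁ ∈ Z ↔ x₁ ∉ Z`. -/

/-- `δ(u)`: the set of subsets `Z` of `c(u)` such that for every word `w` of `u`,
`Z ∩ c(w)` is a singleton `{x}` and `x` occurs exactly once in `w`.
(Words are lists of variables, indexed by `ℕ`; a term is the list of its words.) -/
def delta (u : List (List ℕ)) : Set (Set ℕ) :=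
  {Z | Z ⊆ {x | ∃ w ∈ u, x ∈ w} ∧
    ∀ w ∈ u, ∃ x ∈ Z, x ∈ w ∧ (∀ y ∈ Z, y ∈ w → y = x) ∧ w.count x = 1}

/-- The term `u⁽ⁿ⁾ = x₁x₂ + x₂x₃ + ⋯ + x_{2n}x_{2n+1} + x_{2n+1}x₁ + y₁y₂ + y₂y₁ + y₁`,
where the variables `x₁, …, x_{2n+1}` are the naturals `1, …, 2n+1` and `y₁, y₂` are the
naturals `2n+2, 2n+3` (so that all `2n+3` variables are distinct). -/
def uTerm (n : ℕ) : List (List ℕ) :=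
  ((List.range (2 * n)).map fun i => [i + 1, i + 2]) ++
    [[2 * n + 1, 1], [2 * n + 2, 2 * n + 3], [2 * n + 3, 2 * n + 2], [2 * n + 2]]

theorem mem_iff_notMem_of_pair_mem_delta {u : List (List ℕ)} {Z : Set ℕ} (hZ : Z ∈ delta u)
    {a b : ℕ} (hab : a ≠ b) (hw : [a, b] ∈ u) : a ∈ Z ↔ b ∉ Z := by
  obtain ⟨x, hxZ, hxw, huniq, -⟩ := hZ.2 _ hw
  simp only [List.mem_cons, List.not_mem_nil, or_false] at hxw
  rcases hxw with rfl | rfl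
  · exact iff_of_true hxZ fun hb => hab (huniq b hb (by simp)).symm
  · exact iff_of_false (fun ha => hab (huniq a ha (by simp))) (not_not_intro hxZ)

theorem iff_even_of_forall_lt_succ_iff_not {p : ℕ → Prop} {m : ℕ}
    (h : ∀ i < m, (p (i + 1) ↔ ¬p i)) : ∀ k ≤ m, (p k ↔ (p 0 ↔ Even k))
  | 0, _ => by simp
  | k + 1, hk => by
    rw [h k (by omega), iff_even_of_forall_lt_succ_iff_not h k (by omega), Nat.even_add_one]
    tauto

theorem pair_mem_uTerm {n i : ℕ} (hi : i < 2 * n) : [i + 1, i + 2] ∈ uTerm n :=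
  List.mem_append_left _ (List.mem_map.2 ⟨i, List.mem_range.2 hi, rfl⟩)

theorem closing_pair_mem_uTerm (n : ℕ) : [2 * n + 1, 1] ∈ uTerm n :=
  List.mem_append_right _ (by simp)

/-- For every `n ≥ 1`, `δ(u⁽ⁿ⁾) = ∅`: there is no set `Z` of variables
of `u⁽ⁿ⁾` such that each summand of `u⁽ⁿ⁾` contains exactly one variable from `Z`,
occurring exactly once in that summand. -/
theorem delta_uTerm_empty (n : ℕ) (hn : 1 ≤ n) : delta (uTerm n) = ∅ := by
  refine Set.eq_empty_of_forall_notMem fun Z hZ => ?_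
  have alternating : ∀ i < 2 * n, (i + 1 + 1 ∈ Z ↔ ¬i + 1 ∈ Z) := fun i hi =>
    iff_not_comm.1 (mem_iff_notMem_of_pair_mem_delta hZ (by omega) (pair_mem_uTerm hi))
  have around : 2 * n + 1 ∈ Z ↔ 1 ∈ Z := by
    simpa using iff_even_of_forall_lt_succ_iff_not (p := fun i => i + 1 ∈ Z) alternating
      (2 * n) le_rfl
  have closing := mem_iff_notMem_of_pair_mem_delta hZ (by omega) (closing_pair_mem_uTerm n)
  tauto
end
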